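/- Let V ⊂ ℝ³ be a bounded open set containing the origin and let ρ(x) = |x|. For every integer m ≥ 0 and real a, and every function v smooth on V \ {0} for which the right-hand side is finite, one has Σ_{|α| ≤ m} ‖ρ^{-a+|α|} ∂^α v‖²_{L²(V)} ≤ C Σ_{l ≤ m} |ρ^{-a+l} v|²_{H^l(V)}, where |·|_{H^l} denotes the H^l seminorm (L² norms of all derivatives of exact order l) and C depends only on m, a, and the diameter of V. -/

import Mathlib

open MeasureTheory

noncomputable section

abbrev P3 := ℝ × ℝ × ℝ

def rho3 (p : P3) : ℝ := Real.sqrt (p.1 ^ 2 + p.2.1 ^ 2 + p.2.2 ^ 2)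

def pdx (f : P3 → ℝ) : P3 → ℝ := fun p => fderiv ℝ f p (1, 0, 0)
def pdy (f : P3 → ℝ) : P3 → ℝ := fun p => fderiv ℝ f p (0, 1, 0)
def pdz (f : P3 → ℝ) : P3 → ℝ := fun p => fderiv ℝ f p (0, 0, 1)

def D3 (α : ℕ × ℕ × ℕ) (f : P3 → ℝ) : P3 → ℝ := pdx^[α.1] (pdy^[α.2.1] (pdz^[α.2.2] f))

def wt3 (α : ℕ × ℕ × ℕ) : ℕ := α.1 + α.2.1 + α.2.2

def idx3 (m : ℕ) : Finset (ℕ × ℕ × ℕ) :=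
  ((Finset.range (m+1)) ×ˢ (Finset.range (m+1)) ×ˢ (Finset.range (m+1))).filter
    fun α => wt3 α ≤ m

/-- The multi-indices with |α| = l. -/
def idx3e (l : ℕ) : Finset (ℕ × ℕ × ℕ) :=
  ((Finset.range (l+1)) ×ˢ (Finset.range (l+1)) ×ˢ (Finset.range (l+1))).filter
    fun α => wt3 α = l

/-- Σ_{|α| ≤ m} ‖ρ^{-a+|α|} ∂^α v‖²_{L²(V)}. -/
def WS3 (V : Set P3) (m : ℕ) (a : ℝ) (v : P3 → ℝ) : ℝ :=
  ∑ α ∈ idx3 m, ∫ p in V, (rho3 p ^ ((wt3 α : ℝ) - a) * D3 α v p) ^ 2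

/-- Squared H^l(V) seminorm: Σ_{|β| = l} ‖∂^β w‖²_{L²(V)}. -/
def SN3 (V : Set P3) (l : ℕ) (w : P3 → ℝ) : ℝ :=
  ∑ α ∈ idx3e l, ∫ p in V, (D3 α w p) ^ 2

/-!
Leibniz' rule gives `∂^α (ρ^s v) = ρ^s ∂^α v + Σ g_γ ∂^γ v`, summed over `γ ≤ α` with
`|γ| < |α|`, where each coefficient `g_γ` is built from constants, linear forms and powers of `ρ`
and is homogeneous of degree `s + |γ| - |α|`, so `|g_γ| ≤ C ρ^(s + |γ| - |α|)` off the origin.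
For `s = |α| - a` the lower-order terms are therefore bounded by multiples of
`|ρ^(|γ|-a) ∂^γ v|`, and induction on `|α|` bounds `|ρ^(|α|-a) ∂^α v|` pointwise on `V \ {0}` by a
multiple of `(Σ_{|β| ≤ |α|} |∂^β (ρ^(|β|-a) v)|²)^(1/2)`. Squaring and integrating over `V`, in
which the origin is a null set, gives the inequality with a constant depending only on `m` and `a`.
-/

lemma norm_le_rho3 (p : P3) : ‖p‖ ≤ rho3 p := by
  simp only [norm_prod_le_iff, Real.norm_eq_abs, rho3]
  refine ⟨?_, ?_, ?_⟩ <;> rw [← Real.sqrt_sq_eq_abs] <;> gcongr <;>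
    nlinarith [sq_nonneg p.1, sq_nonneg p.2.1, sq_nonneg p.2.2]

lemma rho3_nonneg (p : P3) : 0 ≤ rho3 p := Real.sqrt_nonneg _

lemma rho3_pos {p : P3} (hp : p ≠ 0) : 0 < rho3 p :=
  (norm_pos_iff.2 hp).trans_le (norm_le_rho3 p)

-- The Euclidean pairing `⟪w, ·⟫`: `P3` carries the sup norm, not an inner product.
def dot3 (w : P3) : P3 →L[ℝ] ℝ :=
  w.1 • ContinuousLinearMap.fst ℝ ℝ (ℝ × ℝ) +
    w.2.1 • (ContinuousLinearMap.fst ℝ ℝ ℝ).comp (ContinuousLinearMap.snd ℝ ℝ (ℝ × ℝ)) +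
    w.2.2 • (ContinuousLinearMap.snd ℝ ℝ ℝ).comp (ContinuousLinearMap.snd ℝ ℝ (ℝ × ℝ))

@[simp] lemma dot3_apply (w p : P3) :
    dot3 w p = w.1 * p.1 + w.2.1 * p.2.1 + w.2.2 * p.2.2 := by
  simp [dot3]

lemma hasFDerivAt_rho3_rpow {p : P3} (hp : p ≠ 0) (u : ℝ) :
    HasFDerivAt (fun q => rho3 q ^ u) ((u * rho3 p ^ (u - 2)) • dot3 p) p := by
  have hρ := rho3_pos hp
  have hx : HasFDerivAt (fun q : P3 => q.1) (dot3 (1, 0, 0)) p :=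
    (dot3 (1, 0, 0)).hasFDerivAt.congr_of_eventuallyEq (.of_forall fun q => by simp)
  have hy : HasFDerivAt (fun q : P3 => q.2.1) (dot3 (0, 1, 0)) p :=
    (dot3 (0, 1, 0)).hasFDerivAt.congr_of_eventuallyEq (.of_forall fun q => by simp)
  have hz : HasFDerivAt (fun q : P3 => q.2.2) (dot3 (0, 0, 1)) p :=
    (dot3 (0, 0, 1)).hasFDerivAt.congr_of_eventuallyEq (.of_forall fun q => by simp)
  have hsq : HasFDerivAt (fun q : P3 => q.1 ^ 2 + q.2.1 ^ 2 + q.2.2 ^ 2) ((2 : ℝ) • dot3 p) p :=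
    (((hx.pow 2).add (hy.pow 2)).add (hz.pow 2)).congr_fderiv (by ext <;> simp)
  have hρ' : HasFDerivAt rho3 ((1 / (2 * rho3 p)) • (2 : ℝ) • dot3 p) p :=
    hsq.sqrt fun h => hρ.ne' (by simp [rho3, h])
  refine (hρ'.rpow_const (p := u) (Or.inl hρ.ne')).congr_fderiv ?_
  have h1 : rho3 p ^ (u - 1) = rho3 p ^ (u - 2) * rho3 p := by
    rw [← Real.rpow_add_one hρ.ne']; ring_nf
  ext <;> simp [h1] <;> field_simp

inductive IsHomogeneousSymbol : ℝ → (P3 → ℝ) → Prop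
  | const (c : ℝ) : IsHomogeneousSymbol 0 fun _ => c
  | linear (ℓ : P3 →L[ℝ] ℝ) : IsHomogeneousSymbol 1 ℓ
  | rpow (u : ℝ) : IsHomogeneousSymbol u fun p => rho3 p ^ u
  | add {t : ℝ} {f g : P3 → ℝ} :
      IsHomogeneousSymbol t f → IsHomogeneousSymbol t g → IsHomogeneousSymbol t (f + g)
  | mul {t t' : ℝ} {f g : P3 → ℝ} :
      IsHomogeneousSymbol t f → IsHomogeneousSymbol t' g → IsHomogeneousSymbol (t + t') (f * g)

namespace IsHomogeneousSymbol

variable {t : ℝ} {f : P3 → ℝ}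

theorem of_eq {t' : ℝ} (hf : IsHomogeneousSymbol t f) (h : t = t') : IsHomogeneousSymbol t' f :=
  h ▸ hf

theorem zero (t : ℝ) : IsHomogeneousSymbol t 0 := by
  convert (const 0).mul (rpow t) using 1
  · ring
  · funext p; simp

theorem exists_abs_le (hf : IsHomogeneousSymbol t f) :
    ∃ C, 0 ≤ C ∧ ∀ p ≠ 0, |f p| ≤ C * rho3 p ^ t := by
  induction hf with
  | const c => exact ⟨|c|, abs_nonneg c, fun p _ => by simp⟩
  | linear ℓ =>
    refine ⟨‖ℓ‖, norm_nonneg ℓ, fun p _ => ?_⟩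
    rw [Real.rpow_one]
    exact (ℓ.le_opNorm p).trans (by gcongr; exact norm_le_rho3 p)
  | rpow u =>
    exact ⟨1, zero_le_one, fun p _ => by
      rw [one_mul, abs_of_nonneg (Real.rpow_nonneg (rho3_nonneg p) u)]⟩
  | add _ _ ihf ihg =>
    obtain ⟨C, hC, hf⟩ := ihf
    obtain ⟨C', hC', hg⟩ := ihg
    refine ⟨C + C', add_nonneg hC hC', fun p hp => ?_⟩
    calc _ ≤ _ := abs_add_le _ _
      _ ≤ _ := add_le_add (hf p hp) (hg p hp)
      _ = _ := (add_mul C C' _).symm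
  | @mul t t' _ _ _ _ ihf ihg =>
    obtain ⟨C, hC, hf⟩ := ihf
    obtain ⟨C', hC', hg⟩ := ihg
    refine ⟨C * C', mul_nonneg hC hC', fun p hp => ?_⟩
    rw [Pi.mul_apply, abs_mul, Real.rpow_add (rho3_pos hp), mul_mul_mul_comm]
    exact mul_le_mul (hf p hp) (hg p hp) (abs_nonneg _)
      (mul_nonneg hC (Real.rpow_nonneg (rho3_nonneg p) t))

theorem exists_fderiv_apply_eq (hf : IsHomogeneousSymbol t f) (w : P3) :
    ∃ g, IsHomogeneousSymbol (t - 1) g ∧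
      ∀ p ≠ 0, DifferentiableAt ℝ f p ∧ fderiv ℝ f p w = g p := by
  induction hf with
  | const c => exact ⟨0, zero _, fun p _ => ⟨differentiableAt_const c, by simp⟩⟩
  | linear ℓ =>
    exact ⟨fun _ => ℓ w, (const _).of_eq (by norm_num), fun p _ => ⟨ℓ.differentiableAt, by simp⟩⟩
  | rpow u =>
    refine ⟨(fun _ => u) * (fun p => rho3 p ^ (u - 2)) * ⇑(dot3 w),
      (((const u).mul (rpow (u - 2))).mul (linear _)).of_eq (by ring), fun p hp => ?_⟩
    have h := hasFDerivAt_rho3_rpow hp u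
    refine ⟨h.differentiableAt, ?_⟩
    rw [h.fderiv]
    simp only [smul_apply, dot3_apply, smul_eq_mul, Pi.mul_apply]
    ring
  | add _ _ ihf ihg =>
    obtain ⟨g, hg, hfg⟩ := ihf
    obtain ⟨g', hg', hfg'⟩ := ihg
    refine ⟨g + g', hg.add hg', fun p hp => ?_⟩
    obtain ⟨hd, he⟩ := hfg p hp
    obtain ⟨hd', he'⟩ := hfg' p hp
    refine ⟨hd.add hd', ?_⟩
    rw [fderiv_add hd hd', add_apply, he, he', Pi.add_apply]
  | @mul t t' f₁ f₂ hf₁ hf₂ ihf ihg =>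
    obtain ⟨g, hg, hfg⟩ := ihf
    obtain ⟨g', hg', hfg'⟩ := ihg
    refine ⟨g * f₂ + f₁ * g',
      ((hg.mul hf₂).of_eq (by ring)).add ((hf₁.mul hg').of_eq (by ring)), fun p hp => ?_⟩
    obtain ⟨hd, he⟩ := hfg p hp
    obtain ⟨hd', he'⟩ := hfg' p hp
    refine ⟨hd.mul hd', ?_⟩
    rw [fderiv_mul hd hd']
    simp only [add_apply, smul_apply, smul_eq_mul, he, he', Pi.add_apply, Pi.mul_apply]
    ring

end IsHomogeneousSymbol

lemma wt3_add (α β : ℕ × ℕ × ℕ) : wt3 (α + β) = wt3 α + wt3 β := by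
  simp only [wt3, Prod.fst_add, Prod.snd_add]; ring

lemma mem_idx3 {m : ℕ} {α : ℕ × ℕ × ℕ} : α ∈ idx3 m ↔ wt3 α ≤ m := by
  rw [idx3, Finset.mem_filter, Finset.mem_product, Finset.mem_product]
  simp only [Finset.mem_range, wt3]
  omega

lemma mem_idx3e {l : ℕ} {α : ℕ × ℕ × ℕ} : α ∈ idx3e l ↔ wt3 α = l := by
  rw [idx3e, Finset.mem_filter, Finset.mem_product, Finset.mem_product]
  simp only [Finset.mem_range, wt3]
  omega

lemma D3_add_unit_fst (γ : ℕ × ℕ × ℕ) (f : P3 → ℝ) : D3 (γ + (1, 0, 0)) f = pdx (D3 γ f) :=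
  Function.iterate_succ_apply' pdx γ.1 _

lemma D3_add_unit_snd {γ : ℕ × ℕ × ℕ} (hγ : γ.1 = 0) (f : P3 → ℝ) :
    D3 (γ + (0, 1, 0)) f = pdy (D3 γ f) := by
  obtain ⟨a, b, k⟩ := γ
  obtain rfl : a = 0 := hγ
  exact Function.iterate_succ_apply' pdy b _

lemma D3_add_unit_thd {γ : ℕ × ℕ × ℕ} (hγ₁ : γ.1 = 0) (hγ₂ : γ.2.1 = 0) (f : P3 → ℝ) :
    D3 (γ + (0, 0, 1)) f = pdz (D3 γ f) := by
  obtain ⟨a, b, k⟩ := γ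
  obtain rfl : a = 0 := hγ₁
  obtain rfl : b = 0 := hγ₂
  exact Function.iterate_succ_apply' pdz k _

section Smooth

variable {O : Set P3} {f : P3 → ℝ}

theorem contDiffOn_fderiv_apply (hO : IsOpen O) (hf : ContDiffOn ℝ (⊤ : ℕ∞) f O) (w : P3) :
    ContDiffOn ℝ (⊤ : ℕ∞) (fun p => fderiv ℝ f p w) O :=
  (hf.fderiv_of_isOpen (m := (⊤ : ℕ∞)) hO (by norm_cast)).clm_apply contDiffOn_const

theorem contDiffOn_D3 (hO : IsOpen O) (hf : ContDiffOn ℝ (⊤ : ℕ∞) f O) (α : ℕ × ℕ × ℕ) :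
    ContDiffOn ℝ (⊤ : ℕ∞) (D3 α f) O := by
  have iterate : ∀ (w : P3) (n : ℕ) {g : P3 → ℝ}, ContDiffOn ℝ (⊤ : ℕ∞) g O →
      ContDiffOn ℝ (⊤ : ℕ∞) ((fun h p => fderiv ℝ h p w)^[n] g) O := fun w n _ hg =>
    Function.Iterate.rec (fun g => ContDiffOn ℝ (⊤ : ℕ∞) g O) hg
      (fun _ hh => contDiffOn_fderiv_apply hO hh w) n
  exact iterate _ _ (iterate _ _ (iterate _ _ hf))

theorem differentiableAt_D3 (hO : IsOpen O) (hf : ContDiffOn ℝ (⊤ : ℕ∞) f O)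
    (α : ℕ × ℕ × ℕ) {p : P3} (hp : p ∈ O) : DifferentiableAt ℝ (D3 α f) p :=
  ((contDiffOn_D3 hO hf α).differentiableOn (by simp)).differentiableAt (hO.mem_nhds hp)

end Smooth

inductive IsLowerOrderOp (s : ℝ) (α : ℕ × ℕ × ℕ) : ((P3 → ℝ) → P3 → ℝ) → Prop
  | zero : IsLowerOrderOp s α 0
  | add {R R' : (P3 → ℝ) → P3 → ℝ} :
      IsLowerOrderOp s α R → IsLowerOrderOp s α R' → IsLowerOrderOp s α (R + R')
  | term {g : P3 → ℝ} {γ : ℕ × ℕ × ℕ} : γ ≤ α → wt3 γ < wt3 α →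
      IsHomogeneousSymbol (s + wt3 γ - wt3 α) g → IsLowerOrderOp s α fun v => g * D3 γ v

def HasLeibnizExpansion (O : Set P3) (s : ℝ) (α : ℕ × ℕ × ℕ) : Prop :=
  ∃ R, IsLowerOrderOp s α R ∧ ∀ v, ContDiffOn ℝ (⊤ : ℕ∞) v O → ∀ p ∈ O,
    D3 α (fun q => rho3 q ^ s * v q) p = rho3 p ^ s * D3 α v p + R v p

section Expansion

variable {O : Set P3} {s : ℝ} {α δ : ℕ × ℕ × ℕ} {w : P3}

theorem IsLowerOrderOp.exists_fderiv_apply_eq (hO : IsOpen O) (hO0 : (0 : P3) ∉ O)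
    (hδ : wt3 δ = 1) (hD : ∀ γ ≤ α, ∀ f, D3 (γ + δ) f = fun p => fderiv ℝ (D3 γ f) p w)
    {R : (P3 → ℝ) → P3 → ℝ} (hR : IsLowerOrderOp s α R) :
    ∃ R', IsLowerOrderOp s (α + δ) R' ∧ ∀ v, ContDiffOn ℝ (⊤ : ℕ∞) v O → ∀ p ∈ O,
      DifferentiableAt ℝ (R v) p ∧ fderiv ℝ (R v) p w = R' v p := by
  have hwt : wt3 (α + δ) = wt3 α + 1 := by rw [wt3_add, hδ]
  induction hR with
  | zero => exact ⟨0, .zero, fun v _ p _ => ⟨differentiableAt_const (0 : ℝ), by simp⟩⟩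
  | add _ _ ih ih' =>
    obtain ⟨R₁, hR₁, h₁⟩ := ih
    obtain ⟨R₂, hR₂, h₂⟩ := ih'
    refine ⟨R₁ + R₂, hR₁.add hR₂, fun v hv p hp => ?_⟩
    obtain ⟨hd₁, he₁⟩ := h₁ v hv p hp
    obtain ⟨hd₂, he₂⟩ := h₂ v hv p hp
    refine ⟨hd₁.add hd₂, ?_⟩
    rw [Pi.add_apply, fderiv_add hd₁ hd₂, add_apply, he₁, he₂]
    rfl
  | @term g γ hγα hγ hg =>
    obtain ⟨g', hg', hgg'⟩ := hg.exists_fderiv_apply_eq w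
    refine ⟨(fun v => g' * D3 γ v) + fun v => g * D3 (γ + δ) v,
      (IsLowerOrderOp.term (hγα.trans le_self_add) (by omega) (hg'.of_eq ?_)).add
        (.term (add_le_add hγα le_rfl) (by rw [wt3_add, hδ]; omega) (hg.of_eq ?_)),
      fun v hv p hp => ?_⟩
    · push_cast [hwt]; ring
    · push_cast [hwt, wt3_add, hδ]; ring
    obtain ⟨hdg, heg⟩ := hgg' p (ne_of_mem_of_not_mem hp hO0)
    have hdγ := differentiableAt_D3 hO hv γ hp
    refine ⟨hdg.mul hdγ, ?_⟩
    rw [fderiv_mul hdg hdγ]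
    simp only [Pi.add_apply, Pi.mul_apply, hD γ hγα, add_apply, smul_apply, smul_eq_mul, heg]
    ring

theorem HasLeibnizExpansion.add_unit (hO : IsOpen O) (hO0 : (0 : P3) ∉ O)
    (hδ : wt3 δ = 1) (hD : ∀ γ ≤ α, ∀ f, D3 (γ + δ) f = fun p => fderiv ℝ (D3 γ f) p w)
    (h : HasLeibnizExpansion O s α) : HasLeibnizExpansion O s (α + δ) := by
  obtain ⟨R, hR, hexp⟩ := h
  obtain ⟨R', hR', hRR'⟩ := hR.exists_fderiv_apply_eq hO hO0 hδ hD
  obtain ⟨g, hg, hρg⟩ := (IsHomogeneousSymbol.rpow s).exists_fderiv_apply_eq w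
  refine ⟨(fun v => g * D3 α v) + R',
    (IsLowerOrderOp.term le_self_add (by rw [wt3_add, hδ]; omega) (hg.of_eq ?_)).add hR',
    fun v hv p hp => ?_⟩
  · push_cast [wt3_add, hδ]; ring
  obtain ⟨hdR, heR⟩ := hRR' v hv p hp
  obtain ⟨hdρ, heρ⟩ := hρg p (ne_of_mem_of_not_mem hp hO0)
  have hdα := differentiableAt_D3 hO hv α hp
  have hloc : D3 α (fun q => rho3 q ^ s * v q) =ᶠ[nhds p]
      (fun q => rho3 q ^ s) * D3 α v + R v :=
    Filter.eventually_of_mem (hO.mem_nhds hp) fun q hq => hexp v hv q hq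
  simp only [hD α le_rfl]
  rw [hloc.fderiv_eq, fderiv_add (hdρ.mul hdα) hdR, fderiv_mul hdρ hdα]
  simp only [add_apply, smul_apply, smul_eq_mul, heρ, heR, Pi.add_apply, Pi.mul_apply]
  ring

/- `D3` differentiates in `z`, then `y`, then `x`, so `α` is built up in that order: each new
derivative then falls outside every `∂^γ` with `γ ≤ α`, and symmetry of second derivatives is
never needed. -/
theorem hasLeibnizExpansion (hO : IsOpen O) (hO0 : (0 : P3) ∉ O) (s : ℝ) :
    ∀ α, HasLeibnizExpansion O s α
  | (a, b, k) => by
    induction a with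
    | succ a ih => exact ih.add_unit hO hO0 rfl fun γ _ f => D3_add_unit_fst γ f
    | zero =>
      induction b with
      | succ b ih =>
        exact ih.add_unit hO hO0 rfl fun γ hγ f => D3_add_unit_snd (Nat.le_zero.1 hγ.1) f
      | zero =>
        induction k with
        | succ k ih =>
          exact ih.add_unit hO hO0 rfl fun γ hγ f =>
            D3_add_unit_thd (Nat.le_zero.1 hγ.1) (Nat.le_zero.1 hγ.2.1) f
        | zero => exact ⟨0, .zero, fun v _ p _ => by simp [D3]⟩

end Expansion

def sumSqD3RpowMul (m : ℕ) (a : ℝ) (v : P3 → ℝ) (p : P3) : ℝ :=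
  ∑ β ∈ idx3 m, (D3 β (fun q => rho3 q ^ ((wt3 β : ℝ) - a) * v q) p) ^ 2

section Pointwise

variable {O : Set P3} {a : ℝ} {v : P3 → ℝ} {p : P3}

lemma sumSqD3RpowMul_nonneg (m : ℕ) : 0 ≤ sumSqD3RpowMul m a v p :=
  Finset.sum_nonneg fun _ _ => sq_nonneg _

lemma sumSqD3RpowMul_mono {k m : ℕ} (h : k ≤ m) :
    sumSqD3RpowMul k a v p ≤ sumSqD3RpowMul m a v p :=
  Finset.sum_le_sum_of_subset_of_nonneg
    (fun _ hβ => mem_idx3.2 ((mem_idx3.1 hβ).trans h)) fun _ _ _ => sq_nonneg _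

lemma abs_D3_rpow_mul_le_sqrt (β : ℕ × ℕ × ℕ) :
    |D3 β (fun q => rho3 q ^ ((wt3 β : ℝ) - a) * v q) p| ≤ √(sumSqD3RpowMul (wt3 β) a v p) :=
  Real.abs_le_sqrt <| Finset.single_le_sum (f := fun γ =>
    (D3 γ (fun q => rho3 q ^ ((wt3 γ : ℝ) - a) * v q) p) ^ 2)
    (fun _ _ => sq_nonneg _) (mem_idx3.2 le_rfl)

theorem IsLowerOrderOp.exists_abs_le (hO0 : (0 : P3) ∉ O) {α : ℕ × ℕ × ℕ}
    {R : (P3 → ℝ) → P3 → ℝ} (hR : IsLowerOrderOp ((wt3 α : ℝ) - a) α R)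
    {M : (P3 → ℝ) → P3 → ℝ}
    (hlow : ∀ γ, wt3 γ < wt3 α → ∃ C, 0 ≤ C ∧ ∀ v, ContDiffOn ℝ (⊤ : ℕ∞) v O → ∀ p ∈ O,
      |rho3 p ^ ((wt3 γ : ℝ) - a) * D3 γ v p| ≤ C * M v p) :
    ∃ K, 0 ≤ K ∧ ∀ v, ContDiffOn ℝ (⊤ : ℕ∞) v O → ∀ p ∈ O, |R v p| ≤ K * M v p := by
  induction hR with
  | zero => exact ⟨0, le_rfl, fun v _ p _ => by simp⟩
  | @add R₁ R₂ _ _ ih ih' =>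
    obtain ⟨K, hK, h⟩ := ih
    obtain ⟨K', hK', h'⟩ := ih'
    refine ⟨K + K', add_nonneg hK hK', fun v hv p hp => ?_⟩
    calc |(R₁ + R₂) v p| ≤ _ := abs_add_le _ _
      _ ≤ _ := add_le_add (h v hv p hp) (h' v hv p hp)
      _ = _ := (add_mul K K' _).symm
  | @term g γ _ hγ hg =>
    obtain ⟨Cg, hCg, hgle⟩ := hg.exists_abs_le
    obtain ⟨C, hC, hle⟩ := hlow γ hγ
    refine ⟨Cg * C, mul_nonneg hCg hC, fun v hv p hp => ?_⟩
    have hp0 : p ≠ 0 := ne_of_mem_of_not_mem hp hO0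
    have hρ : rho3 p ^ ((wt3 α : ℝ) - a + wt3 γ - wt3 α) = |rho3 p ^ ((wt3 γ : ℝ) - a)| := by
      rw [abs_of_pos (Real.rpow_pos_of_pos (rho3_pos hp0) _)]; ring_nf
    calc |g p * D3 γ v p| = |g p| * |D3 γ v p| := abs_mul _ _
      _ ≤ Cg * rho3 p ^ ((wt3 α : ℝ) - a + wt3 γ - wt3 α) * |D3 γ v p| := by
        gcongr; exact hgle p hp0
      _ = Cg * |rho3 p ^ ((wt3 γ : ℝ) - a) * D3 γ v p| := by rw [hρ, abs_mul, mul_assoc]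
      _ ≤ Cg * (C * M v p) := by gcongr; exact hle v hv p hp
      _ = Cg * C * M v p := (mul_assoc _ _ _).symm

theorem exists_abs_rpow_mul_D3_le (hO : IsOpen O) (hO0 : (0 : P3) ∉ O) (a : ℝ)
    (α : ℕ × ℕ × ℕ) : ∃ C, 0 ≤ C ∧ ∀ v, ContDiffOn ℝ (⊤ : ℕ∞) v O → ∀ p ∈ O,
      |rho3 p ^ ((wt3 α : ℝ) - a) * D3 α v p| ≤ C * √(sumSqD3RpowMul (wt3 α) a v p) := by
  induction hn : wt3 α using Nat.strong_induction_on generalizing α with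
  | _ n ih =>
  subst hn
  obtain ⟨R, hR, hexp⟩ := hasLeibnizExpansion hO hO0 ((wt3 α : ℝ) - a) α
  obtain ⟨K, hK, hRle⟩ := hR.exists_abs_le hO0
    (M := fun v p => √(sumSqD3RpowMul (wt3 α) a v p)) fun γ hγ => by
    obtain ⟨C, hC, hle⟩ := ih _ hγ γ rfl
    exact ⟨C, hC, fun v hv p hp => (hle v hv p hp).trans (by
      gcongr; exact sumSqD3RpowMul_mono hγ.le)⟩
  refine ⟨1 + K, add_nonneg zero_le_one hK, fun v hv p hp => ?_⟩
  have hsplit : rho3 p ^ ((wt3 α : ℝ) - a) * D3 α v p =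
      D3 α (fun q => rho3 q ^ ((wt3 α : ℝ) - a) * v q) p - R v p := by
    rw [hexp v hv p hp]; ring
  rw [hsplit]
  calc _ ≤ _ := abs_sub _ _
    _ ≤ _ := add_le_add (abs_D3_rpow_mul_le_sqrt α) (hRle v hv p hp)
    _ = _ := by ring

end Pointwise

theorem exists_sq_rpow_mul_D3_le {O : Set P3} (hO : IsOpen O) (hO0 : (0 : P3) ∉ O)
    (m : ℕ) (a : ℝ) : ∃ C, 0 ≤ C ∧ ∀ α ∈ idx3 m, ∀ v, ContDiffOn ℝ (⊤ : ℕ∞) v O → ∀ p ∈ O,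
      (rho3 p ^ ((wt3 α : ℝ) - a) * D3 α v p) ^ 2 ≤ C * sumSqD3RpowMul m a v p := by
  choose C hC hle using exists_abs_rpow_mul_D3_le hO hO0 a
  refine ⟨∑ α ∈ idx3 m, C α ^ 2, Finset.sum_nonneg fun _ _ => sq_nonneg _,
    fun α hα v hv p hp => ?_⟩
  calc _ = |rho3 p ^ ((wt3 α : ℝ) - a) * D3 α v p| ^ 2 := (sq_abs _).symm
    _ ≤ (C α * √(sumSqD3RpowMul (wt3 α) a v p)) ^ 2 := by gcongr; exact hle α v hv p hp
    _ = C α ^ 2 * sumSqD3RpowMul (wt3 α) a v p := by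
      rw [mul_pow, Real.sq_sqrt (sumSqD3RpowMul_nonneg _)]
    _ ≤ _ := mul_le_mul
      (Finset.single_le_sum (f := fun α => C α ^ 2) (fun _ _ => sq_nonneg _) hα)
      (sumSqD3RpowMul_mono (mem_idx3.1 hα)) (sumSqD3RpowMul_nonneg _)
      (Finset.sum_nonneg fun _ _ => sq_nonneg _)

section Integral

variable {V : Set P3} {m : ℕ} {a : ℝ} {v : P3 → ℝ}

theorem integrable_sumSqD3RpowMul (hint : ∀ l ≤ m, ∀ α ∈ idx3e l,
      Integrable (fun p => (D3 α (fun q => rho3 q ^ ((l : ℝ) - a) * v q) p) ^ 2)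
        (volume.restrict V)) :
    Integrable (sumSqD3RpowMul m a v) (volume.restrict V) :=
  integrable_finsetSum _ fun β hβ => hint _ (mem_idx3.1 hβ) β (mem_idx3e.2 rfl)

theorem integral_sumSqD3RpowMul (hint : ∀ l ≤ m, ∀ α ∈ idx3e l,
      Integrable (fun p => (D3 α (fun q => rho3 q ^ ((l : ℝ) - a) * v q) p) ^ 2)
        (volume.restrict V)) :
    ∫ p in V, sumSqD3RpowMul m a v p =
      ∑ l ∈ Finset.range (m + 1), SN3 V l (fun q => rho3 q ^ ((l : ℝ) - a) * v q) := by
  simp only [sumSqD3RpowMul]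
  rw [integral_finsetSum _ fun β hβ => hint _ (mem_idx3.1 hβ) β (mem_idx3e.2 rfl),
    ← Finset.sum_fiberwise_of_maps_to (t := Finset.range (m + 1)) (g := wt3)
      fun β hβ => Finset.mem_range.2 (Nat.lt_succ_of_le (mem_idx3.1 hβ))]
  refine Finset.sum_congr rfl fun l hl => ?_
  have hfiber : idx3e l = {β ∈ idx3 m | wt3 β = l} := by
    ext β
    rw [Finset.mem_filter, mem_idx3, mem_idx3e]
    have := Finset.mem_range.1 hl
    omega
  rw [SN3, hfiber]
  exact Finset.sum_congr rfl fun β hβ => by rw [(Finset.mem_filter.1 hβ).2]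

end Integral

instance : NullSingletonClass (volume : Measure P3) := by
  rw [Measure.volume_eq_prod]; infer_instance

theorem stmt_4_general (V : Set P3) (hVo : IsOpen V) (m : ℕ) (a : ℝ) :
    ∃ C > 0, ∀ v : P3 → ℝ, ContDiffOn ℝ (⊤ : ℕ∞) v (V \ {0}) →
      (∀ l ≤ m, ∀ α ∈ idx3e l,
        Integrable (fun p => (D3 α (fun q => rho3 q ^ ((l : ℝ) - a) * v q) p) ^ 2)
          (volume.restrict V)) →
      WS3 V m a v
        ≤ C * ∑ l ∈ Finset.range (m+1),
            SN3 V l (fun q => rho3 q ^ ((l : ℝ) - a) * v q) := by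
  obtain ⟨C, hC, hle⟩ := exists_sq_rpow_mul_D3_le (hVo.sdiff isClosed_singleton)
    (fun h => h.2 rfl) m a
  refine ⟨(idx3 m).card * C + 1, by positivity, fun v hv hint => ?_⟩
  have hae : ∀ᵐ p ∂volume.restrict V, p ∈ V \ {0} :=
    (ae_restrict_mem hVo.measurableSet).and (Measure.ae_ne _ 0)
  have hF : 0 ≤ ∫ p in V, sumSqD3RpowMul m a v p :=
    integral_nonneg fun _ => sumSqD3RpowMul_nonneg m
  calc WS3 V m a v ≤ ∑ α ∈ idx3 m, C * ∫ p in V, sumSqD3RpowMul m a v p :=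
        Finset.sum_le_sum fun α hα => by
          rw [← integral_const_mul]
          exact integral_mono_of_nonneg (.of_forall fun _ => sq_nonneg _)
            ((integrable_sumSqD3RpowMul hint).const_mul C)
            (hae.mono fun p hp => hle α hα v hv p hp)
    _ ≤ ((idx3 m).card * C + 1) * ∫ p in V, sumSqD3RpowMul m a v p := by
      rw [Finset.sum_const, nsmul_eq_mul, ← mul_assoc]
      exact mul_le_mul_of_nonneg_right (le_add_of_nonneg_right zero_le_one) hF
    _ = _ := by rw [integral_sumSqD3RpowMul hint]

/-- Σ_{|α|≤m} ‖ρ^{-a+|α|} ∂^α v‖²_{L²(V)} ≤ C Σ_{l≤m} |ρ^{-a+l} v|²_{H^l(V)},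
with C depending only on m, a and V. -/
theorem stmt_4 (V : Set P3) (hVo : IsOpen V) (hVb : Bornology.IsBounded V)
    (h0 : (0 : P3) ∈ V) (m : ℕ) (a : ℝ) :
    ∃ C > 0, ∀ v : P3 → ℝ, ContDiffOn ℝ (⊤ : ℕ∞) v (V \ {0}) →
      (∀ l ≤ m, ∀ α ∈ idx3e l,
        Integrable (fun p => (D3 α (fun q => rho3 q ^ ((l : ℝ) - a) * v q) p) ^ 2)
          (volume.restrict V)) →
      WS3 V m a v
        ≤ C * ∑ l ∈ Finset.range (m+1),
            SN3 V l (fun q => rho3 q ^ ((l : ℝ) - a) * v q) :=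
  stmt_4_general V hVo m a
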